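/- arXiv:2306.01172 — 3 statements merged into one kernel-verified Lean document; each statement's English description precedes it below -/
import Mathlib

section
/- (One-step Picard contraction, key estimate in Lemma 2.2) Let u ∈ V be a weak NSE solution and let u_{k+1} ∈ V be a Picard step from u_k ∈ V. Then ‖G(u − u_{k+1})‖ ≤ α ‖G(u − u_k)‖, where α = M ν⁻² F. -/
/-!
Subtracting the Picard step from the NSE and testing with the error `e = u - u_{k+1}`, the
skew-symmetry `b(u_k, e, e) = 0` leaves `ν ‖G e‖² = -b(u - u_k, u, e)`, so
`ν ‖G e‖ ≤ M ‖G (u - u_k)‖ ‖G u‖`. Testing the NSE with `u` itself gives the a priori bound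
`ν ‖G u‖ ≤ F`, and combining the two yields the factor `α = M F / ν²`.
-/

open RealInnerProductSpace

lemma mul_le_of_mul_sq_le_mul {a c t : ℝ} (hc : 0 ≤ c) (ht : 0 ≤ t)
    (h : a * t ^ 2 ≤ c * t) : a * t ≤ c := by
  rcases ht.eq_or_lt with rfl | ht
  · simpa using hc
  · exact le_of_mul_le_mul_right (by nlinarith) ht

section Picard

variable {V W : Type*} [NormedAddCommGroup V] [InnerProductSpace ℝ V]
  [NormedAddCommGroup W] [InnerProductSpace ℝ W]
  (G : V →ₗ[ℝ] W) (b : V →ₗ[ℝ] V →ₗ[ℝ] V →ₗ[ℝ] ℝ) (f : V →ₗ[ℝ] ℝ) (ν : ℝ)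

def IsPicardStep (uk uk1 : V) : Prop :=
  ∀ v : V, ν * ⟪G uk1, G v⟫ + b uk uk1 v = f v

def IsWeakNSESolution (u : V) : Prop :=
  IsPicardStep G b f ν u u

variable {G b f ν}

lemma IsWeakNSESolution.mul_norm_le {F : ℝ} (hF : 0 ≤ F) (hbskew : ∀ u v : V, b u v v = 0)
    (hf : ∀ v : V, |f v| ≤ F * ‖G v‖) {u : V} (hu : IsWeakNSESolution G b f ν u) :
    ν * ‖G u‖ ≤ F := by
  refine mul_le_of_mul_sq_le_mul hF (norm_nonneg _) ?_
  have hfu : ν * ⟪G u, G u⟫ = f u := by simpa [hbskew u u] using hu u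
  rw [← real_inner_self_eq_norm_sq, hfu]
  exact (le_abs_self _).trans (hf u)

lemma IsPicardStep.error_identity {u uk uk1 : V} (hu : IsWeakNSESolution G b f ν u)
    (hstep : IsPicardStep G b f ν uk uk1) (v : V) :
    ν * ⟪G (u - uk1), G v⟫ + b (u - uk) u v + b uk (u - uk1) v = 0 := by
  have h := congrArg₂ (· - ·) (hu v) (hstep v)
  simp only [map_sub, LinearMap.sub_apply, inner_sub_left, sub_self] at h ⊢
  linarith

lemma IsPicardStep.mul_norm_error_le {M : ℝ} (hM : 0 ≤ M) (hbskew : ∀ u v : V, b u v v = 0)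
    (hb2 : ∀ u w v : V, |b u w v| ≤ M * ‖G u‖ * ‖G w‖ * ‖G v‖) {u uk uk1 : V}
    (hu : IsWeakNSESolution G b f ν u) (hstep : IsPicardStep G b f ν uk uk1) :
    ν * ‖G (u - uk1)‖ ≤ M * ‖G (u - uk)‖ * ‖G u‖ := by
  refine mul_le_of_mul_sq_le_mul (by positivity) (norm_nonneg _) ?_
  have herr : ν * ⟪G (u - uk1), G (u - uk1)⟫ = -b (u - uk) u (u - uk1) := by
    linarith [hstep.error_identity hu (u - uk1), hbskew uk (u - uk1)]
  rw [← real_inner_self_eq_norm_sq, herr]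
  exact (neg_le_abs _).trans (hb2 _ _ _)

end Picard

theorem picard_one_step_contraction_general
    {V W : Type*} [NormedAddCommGroup V] [InnerProductSpace ℝ V]
    [NormedAddCommGroup W] [InnerProductSpace ℝ W]
    (G : V →ₗ[ℝ] W) (b : V →ₗ[ℝ] V →ₗ[ℝ] V →ₗ[ℝ] ℝ) (f : V →ₗ[ℝ] ℝ)
    (M F ν : ℝ) (hM : 0 < M) (hF : 0 ≤ F) (hν : 0 < ν)
    (hbskew : ∀ u v : V, b u v v = 0)
    (hb2 : ∀ u w v : V, |b u w v| ≤ M * ‖G u‖ * ‖G w‖ * ‖G v‖)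
    (hf : ∀ v : V, |f v| ≤ F * ‖G v‖)
    (u : V) (hu : ∀ v : V, ν * (inner ℝ (G u) (G v) : ℝ) + b u u v = f v)
    (uk uk1 : V)
    (hstep : ∀ v : V, ν * (inner ℝ (G uk1) (G v) : ℝ) + b uk uk1 v = f v)
    : ‖G (u - uk1)‖ ≤ (M * F / ν ^ 2) * ‖G (u - uk)‖ := by
  have hsol : IsWeakNSESolution G b f ν u := hu
  have hpicard : IsPicardStep G b f ν uk uk1 := hstep
  have hapriori := hsol.mul_norm_le hF hbskew hf
  have herror := hpicard.mul_norm_error_le hM.le hbskew hb2 hsol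
  rw [div_mul_eq_mul_div, le_div_iff₀ (by positivity)]
  calc ‖G (u - uk1)‖ * ν ^ 2 = ν * (ν * ‖G (u - uk1)‖) := by ring
    _ ≤ ν * (M * ‖G (u - uk)‖ * ‖G u‖) := by gcongr
    _ = M * ‖G (u - uk)‖ * (ν * ‖G u‖) := by ring
    _ ≤ M * ‖G (u - uk)‖ * F := by gcongr
    _ = M * F * ‖G (u - uk)‖ := by ring

theorem picard_one_step_contraction
    {V W : Type*} [NormedAddCommGroup V] [InnerProductSpace ℝ V]
    [NormedAddCommGroup W] [InnerProductSpace ℝ W]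
    (G : V →ₗ[ℝ] W) (b : V →ₗ[ℝ] V →ₗ[ℝ] V →ₗ[ℝ] ℝ) (f : V →ₗ[ℝ] ℝ)
    (M F ν : ℝ) (hM : 0 < M) (hF : 0 ≤ F) (hν : 0 < ν)
    (hbskew : ∀ u v : V, b u v v = 0)
    (hb1 : ∀ u w v : V, |b u w v| ≤ M * Real.sqrt ‖u‖ * Real.sqrt ‖G u‖ * ‖G w‖ * ‖G v‖)
    (hb2 : ∀ u w v : V, |b u w v| ≤ M * ‖G u‖ * ‖G w‖ * ‖G v‖)
    (hb3 : ∀ u w v : V, |b u w v| ≤ M * ‖G u‖ * ‖G w‖ * Real.sqrt ‖v‖ * Real.sqrt ‖G v‖)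
    (hf : ∀ v : V, |f v| ≤ F * ‖G v‖)
    (u : V) (hu : ∀ v : V, ν * (inner ℝ (G u) (G v) : ℝ) + b u u v = f v)
    (uk uk1 : V)
    (hstep : ∀ v : V, ν * (inner ℝ (G uk1) (G v) : ℝ) + b uk uk1 v = f v)
    : ‖G (u - uk1)‖ ≤ (M * F / ν ^ 2) * ‖G (u - uk)‖ :=
  picard_one_step_contraction_general G b f M F ν hM hF hν hbskew hb2 hf u hu uk uk1 hstep
end

section
/- (Stability of the Newton iteration, Lemma 6.1) Assume 8α ≤ 1 where α = M ν⁻² F, and let (u_k)_{k≥0} be a sequence in V with ‖G u_0‖ ≤ 2 ν⁻¹ F such that for every k, u_{k+1} is a Newton step from u_k. Then ‖G u_k‖ ≤ 2 ν⁻¹ F for every k. -/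
/-!
Induction on `k`. Testing the Newton equation for `u_{k+1}` with `v = u_{k+1}` kills
`b(u_k, u_{k+1}, u_{k+1})` by skew-symmetry, and the remaining terms give, with
`a = ‖G u_k‖` and `x = ‖G u_{k+1}‖`, the energy estimate `ν x² ≤ (F + M a² + M a x) x`.
If `a ≤ 2F/ν`, then `8α ≤ 1` gives `M a ≤ ν/4`, and the estimate becomes `(3/4) ν x ≤ (3/2) F`.
-/

section NewtonStep

variable {V W : Type*} [NormedAddCommGroup V] [InnerProductSpace ℝ V]
  [NormedAddCommGroup W] [InnerProductSpace ℝ W]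

def IsNewtonStep (G : V →ₗ[ℝ] W) (b : V →ₗ[ℝ] V →ₗ[ℝ] V →ₗ[ℝ] ℝ) (f : V →ₗ[ℝ] ℝ) (ν : ℝ)
    (u u' : V) : Prop :=
  ∀ v : V, ν * (inner ℝ (G u') (G v) : ℝ) + b u u' v + b u' u v = f v + b u u v

theorem IsNewtonStep.energy_le {G : V →ₗ[ℝ] W} {b : V →ₗ[ℝ] V →ₗ[ℝ] V →ₗ[ℝ] ℝ}
    {f : V →ₗ[ℝ] ℝ} {M F ν : ℝ} {u u' : V}
    (hbskew : ∀ u v : V, b u v v = 0)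
    (hb : ∀ u w v : V, |b u w v| ≤ M * ‖G u‖ * ‖G w‖ * ‖G v‖)
    (hf : ∀ v : V, |f v| ≤ F * ‖G v‖) (h : IsNewtonStep G b f ν u u') :
    ν * ‖G u'‖ ^ 2 ≤ (F + M * ‖G u‖ ^ 2 + M * ‖G u‖ * ‖G u'‖) * ‖G u'‖ := by
  have htest := h u'
  rw [real_inner_self_eq_norm_sq, hbskew] at htest
  have hf' := (abs_le.mp (hf u')).2
  have hb₁ := (abs_le.mp (hb u u u')).2
  have hb₂ := (abs_le.mp (hb u' u u')).1
  nlinarith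

end NewtonStep

theorem le_of_newton_energy_le {M F ν a x : ℝ} (hM : 0 ≤ M) (hν : 0 < ν)
    (hα : 8 * (M * F / ν ^ 2) ≤ 1) (ha₀ : 0 ≤ a) (hx₀ : 0 ≤ x) (ha : a ≤ 2 * ν⁻¹ * F)
    (hx : ν * x ^ 2 ≤ (F + M * a ^ 2 + M * a * x) * x) :
    x ≤ 2 * ν⁻¹ * F := by
  set r := 2 * ν⁻¹ * F with hr
  have hνr : ν * r = 2 * F := by rw [hr]; field_simp
  have hMr : M * r ≤ ν / 4 := by
    have : M * r = 2 * (M * F / ν ^ 2) * ν := by rw [hr]; field_simp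
    nlinarith
  have hMa : M * a ≤ ν / 4 := (mul_le_mul_of_nonneg_left ha hM).trans hMr
  rcases hx₀.eq_or_lt with rfl | hx_pos
  · exact ha₀.trans ha
  have hlin : ν * x ≤ F + M * a ^ 2 + M * a * x := le_of_mul_le_mul_right (by nlinarith) hx_pos
  nlinarith [mul_le_mul_of_nonneg_right hMa hx₀, mul_le_mul_of_nonneg_right hMa ha₀,
    mul_le_mul_of_nonneg_left ha hν.le]

theorem newton_stability_general
    {V W : Type*} [NormedAddCommGroup V] [InnerProductSpace ℝ V]
    [NormedAddCommGroup W] [InnerProductSpace ℝ W]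
    (G : V →ₗ[ℝ] W) (b : V →ₗ[ℝ] V →ₗ[ℝ] V →ₗ[ℝ] ℝ) (f : V →ₗ[ℝ] ℝ)
    (M F ν : ℝ) (hM : 0 < M) (hν : 0 < ν)
    (hbskew : ∀ u v : V, b u v v = 0)
    (hb2 : ∀ u w v : V, |b u w v| ≤ M * ‖G u‖ * ‖G w‖ * ‖G v‖)
    (hf : ∀ v : V, |f v| ≤ F * ‖G v‖)
    (hα : 8 * (M * F / ν ^ 2) ≤ 1)
    (uk : ℕ → V) (h0 : ‖G (uk 0)‖ ≤ 2 * ν⁻¹ * F)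
    (hstep : ∀ k, ∀ v : V, ν * (inner ℝ (G (uk (k + 1))) (G v) : ℝ) + b (uk k) (uk (k + 1)) v
      + b (uk (k + 1)) (uk k) v = f v + b (uk k) (uk k) v)
    : ∀ k, ‖G (uk k)‖ ≤ 2 * ν⁻¹ * F := by
  intro k
  induction k with
  | zero => exact h0
  | succ k ih =>
    have henergy := IsNewtonStep.energy_le hbskew hb2 hf (hstep k)
    exact le_of_newton_energy_le hM.le hν hα (norm_nonneg _) (norm_nonneg _) ih henergy

theorem newton_stability
    {V W : Type*} [NormedAddCommGroup V] [InnerProductSpace ℝ V]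
    [NormedAddCommGroup W] [InnerProductSpace ℝ W]
    (G : V →ₗ[ℝ] W) (b : V →ₗ[ℝ] V →ₗ[ℝ] V →ₗ[ℝ] ℝ) (f : V →ₗ[ℝ] ℝ)
    (M F ν : ℝ) (hM : 0 < M) (hF : 0 ≤ F) (hν : 0 < ν)
    (hbskew : ∀ u v : V, b u v v = 0)
    (hb1 : ∀ u w v : V, |b u w v| ≤ M * Real.sqrt ‖u‖ * Real.sqrt ‖G u‖ * ‖G w‖ * ‖G v‖)
    (hb2 : ∀ u w v : V, |b u w v| ≤ M * ‖G u‖ * ‖G w‖ * ‖G v‖)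
    (hb3 : ∀ u w v : V, |b u w v| ≤ M * ‖G u‖ * ‖G w‖ * Real.sqrt ‖v‖ * Real.sqrt ‖G v‖)
    (hf : ∀ v : V, |f v| ≤ F * ‖G v‖)
    (hα : 8 * (M * F / ν ^ 2) ≤ 1)
    (uk : ℕ → V) (h0 : ‖G (uk 0)‖ ≤ 2 * ν⁻¹ * F)
    (hstep : ∀ k, ∀ v : V, ν * (inner ℝ (G (uk (k + 1))) (G v) : ℝ) + b (uk k) (uk (k + 1)) v
      + b (uk (k + 1)) (uk k) v = f v + b (uk k) (uk k) v)
    : ∀ k, ‖G (uk k)‖ ≤ 2 * ν⁻¹ * F :=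
  newton_stability_general G b f M F ν hM hν hbskew hb2 hf hα uk h0 hstep
end

section
/- (Quadratic convergence of CDA-Newton without smallness on α, Theorem 4.2) Assume μ ≥ ν/(8 C_I² H²). Let u ∈ V be a weak NSE solution, let (u_k)_{k≥0} be a sequence in V such that for every k, u_{k+1} is a CDA-Newton step from u_k, and let A > 0 satisfy both √(8A/ν) ‖G(u − u_0)‖ < 1 and ν/(16 C_I² H²) − M⁴/(16 A² ν) − (64 M⁴/ν³) ‖G(u − u_0)‖⁴ − 64 ν α⁴ ≥ 0, where α = M ν⁻² F. Then for every k, ‖G(u − u_{k+1})‖ ≤ √(8A/ν) ‖G(u − u_k)‖², and ‖G(u − u_k)‖ → 0 as k → ∞. -/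
/-!
Testing the difference of the NSE and the CDA-Newton equations with the new error `e' = u - uₖ₊₁`
and using skew-symmetry leaves `ν‖∇e'‖² + μ‖I_H e'‖²` bounded by
`M (‖∇u‖ + ‖∇e‖) ‖e'‖^{1/2} ‖∇e'‖^{3/2} + M ‖∇e‖² ‖e'‖^{1/2} ‖∇e'‖^{1/2}`, where `‖∇u‖ ≤ F/ν`.
Young's inequality turns them into `(3ν/4)‖∇e'‖² + A‖∇e‖⁴ + K‖e'‖²`, and the nudging term absorbs
`K‖e'‖²` because `‖e'‖ ≤ C_I H‖∇e'‖ + ‖I_H e'‖`; the smallness of `K` is exactly the hypothesis on `A`.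
This gives `‖∇e'‖ ≤ √(8A/ν)‖∇e‖²` as long as `‖∇e‖ ≤ ‖∇e₀‖`, and since `√(8A/ν)‖∇e₀‖ < 1`
the errors then decay geometrically, so the proviso is never violated.
-/

lemma young_mul_pow_three {x t ν : ℝ} (hx : 0 ≤ x) (ht : 0 ≤ t) (hν : 0 < ν) :
    x * t ^ 3 ≤ ν / 4 * t ^ 4 + 64 / ν ^ 3 * x ^ 4 := by
  rcases le_total (4 * x) (ν * t) with h | h
  · have hsmall : x * t ^ 3 ≤ ν / 4 * t ^ 4 := by nlinarith [pow_nonneg ht 3]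
    have : 0 ≤ 64 / ν ^ 3 * x ^ 4 := by positivity
    linarith
  · have ht' : t ^ 3 ≤ (4 * x / ν) ^ 3 :=
      pow_le_pow_left₀ ht (by rw [le_div_iff₀ hν]; linarith) 3
    calc x * t ^ 3 ≤ x * (4 * x / ν) ^ 3 := mul_le_mul_of_nonneg_left ht' hx
      _ = 64 / ν ^ 3 * x ^ 4 := by ring
      _ ≤ ν / 4 * t ^ 4 + 64 / ν ^ 3 * x ^ 4 := le_add_of_nonneg_left (by positivity)

lemma mul_le_mul_sq_add_sq_div_four_mul {a b c : ℝ} (hc : 0 < c) :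
    a * b ≤ c * a ^ 2 + b ^ 2 / (4 * c) := by
  have h : 0 ≤ (2 * c * a - b) ^ 2 / (4 * c) := by positivity
  have e : (2 * c * a - b) ^ 2 / (4 * c) = c * a ^ 2 + b ^ 2 / (4 * c) - a * b := by
    field_simp
    ring
  linarith

lemma young_sq_mul_mul {M A ν E s t : ℝ} (hA : 0 < A) (hν : 0 < ν) :
    M * E ^ 2 * s * t ≤ A * E ^ 4 + M ^ 4 / (16 * A ^ 2 * ν) * s ^ 4 + ν / 4 * t ^ 4 := by
  have h1 := mul_le_mul_sq_add_sq_div_four_mul (a := E ^ 2) (b := M * s * t) hA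
  have h2 := mul_le_mul_sq_add_sq_div_four_mul (a := M ^ 2 * s ^ 2 / (4 * A)) (b := t ^ 2)
    (inv_pos.mpr hν)
  have e1 : (M * s * t) ^ 2 / (4 * A) = M ^ 2 * s ^ 2 / (4 * A) * t ^ 2 := by ring
  have e2 : ν⁻¹ * (M ^ 2 * s ^ 2 / (4 * A)) ^ 2 + (t ^ 2) ^ 2 / (4 * ν⁻¹)
      = M ^ 4 / (16 * A ^ 2 * ν) * s ^ 4 + ν / 4 * t ^ 4 := by
    field_simp
    ring
  calc M * E ^ 2 * s * t = E ^ 2 * (M * s * t) := by ring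
    _ ≤ A * (E ^ 2) ^ 2 + (M * s * t) ^ 2 / (4 * A) := h1
    _ ≤ A * E ^ 4 + M ^ 4 / (16 * A ^ 2 * ν) * s ^ 4 + ν / 4 * t ^ 4 := by
      rw [e1, ← pow_mul]
      linarith

lemma le_geometric_of_quadratic_step {x : ℕ → ℝ} {c : ℝ} (hc : 0 ≤ c) (hx : ∀ k, 0 ≤ x k)
    (hcx : c * x 0 ≤ 1) (hstep : ∀ k, x k ≤ x 0 → x (k + 1) ≤ c * x k ^ 2) (k : ℕ) :
    x k ≤ (c * x 0) ^ k * x 0 := by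
  have hq : 0 ≤ c * x 0 := mul_nonneg hc (hx 0)
  induction k with
  | zero => simp
  | succ k ih =>
    have hk : x k ≤ x 0 := ih.trans (mul_le_of_le_one_left (hx 0) (pow_le_one₀ hq hcx))
    calc x (k + 1) ≤ c * x k ^ 2 := hstep k hk
      _ ≤ c * x 0 * x k := by nlinarith [mul_le_mul_of_nonneg_left hk (mul_nonneg hc (hx k))]
      _ ≤ c * x 0 * ((c * x 0) ^ k * x 0) := mul_le_mul_of_nonneg_left ih hq
      _ = (c * x 0) ^ (k + 1) * x 0 := by ring

lemma cda_energy_absorption {ν A M CI H μ F E₀ s t m U E : ℝ}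
    (hν : 0 < ν) (hA : 0 < A) (hM : 0 ≤ M) (hCI : 0 < CI) (hH : 0 < H)
    (hμ : μ ≥ ν / (8 * CI ^ 2 * H ^ 2))
    (hcond : ν / (16 * CI ^ 2 * H ^ 2) - M ^ 4 / (16 * A ^ 2 * ν)
      - (64 * M ^ 4 / ν ^ 3) * E₀ ^ 4 - 64 * ν * (M * F / ν ^ 2) ^ 4 ≥ 0)
    (hs : 0 ≤ s) (ht : 0 ≤ t) (hU : 0 ≤ U) (hUF : U ≤ F / ν) (hE : 0 ≤ E) (hEE₀ : E ≤ E₀)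
    (hinterp : s ^ 2 ≤ CI * H * t ^ 2 + m)
    (henergy : ν * t ^ 4 + μ * m ^ 2 ≤ M * (U + E) * s * t ^ 3 + M * E ^ 2 * s * t) :
    t ^ 4 ≤ 8 * A / ν * E ^ 4 := by
  set K := M ^ 4 / (16 * A ^ 2 * ν) + 64 * M ^ 4 / ν ^ 3 * E₀ ^ 4 + 64 * ν * (M * F / ν ^ 2) ^ 4
  have hyoung : ν * t ^ 4 + μ * m ^ 2 ≤ 3 * ν / 4 * t ^ 4 + K * s ^ 4 + A * E ^ 4 := by
    have hUs := young_mul_pow_three (x := M * U * s) (by positivity) ht hν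
    have hEs := young_mul_pow_three (x := M * E * s) (by positivity) ht hν
    have hE2 := young_sq_mul_mul (M := M) (E := E) (s := s) (t := t) hA hν
    have hU4 : 64 / ν ^ 3 * (M * U * s) ^ 4 ≤ 64 * ν * (M * F / ν ^ 2) ^ 4 * s ^ 4 := by
      have e : 64 * ν * (M * F / ν ^ 2) ^ 4 * s ^ 4 = 64 / ν ^ 3 * (M * (F / ν) * s) ^ 4 := by
        field_simp
      rw [e]
      gcongr
    have hE4 : 64 / ν ^ 3 * (M * E * s) ^ 4 ≤ 64 * M ^ 4 / ν ^ 3 * E₀ ^ 4 * s ^ 4 := by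
      rw [show 64 * M ^ 4 / ν ^ 3 * E₀ ^ 4 * s ^ 4 = 64 / ν ^ 3 * (M * E₀ * s) ^ 4 by ring]
      gcongr
    linarith
  have habsorb : K * s ^ 4 ≤ ν / 8 * t ^ 4 + μ * m ^ 2 := by
    have hK : K * (2 * (CI ^ 2 * H ^ 2)) ≤ ν / 8 := by
      have := mul_le_mul_of_nonneg_right (show K ≤ ν / (16 * CI ^ 2 * H ^ 2) by linarith)
        (show 0 ≤ 2 * (CI ^ 2 * H ^ 2) by positivity)
      rwa [show ν / (16 * CI ^ 2 * H ^ 2) * (2 * (CI ^ 2 * H ^ 2)) = ν / 8 by field_simp; ring]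
        at this
    have hKμ : 2 * K ≤ μ := by
      rw [show ν / (8 * CI ^ 2 * H ^ 2) = 2 * (ν / (16 * CI ^ 2 * H ^ 2)) by ring] at hμ
      linarith
    have hs4 : s ^ 4 ≤ 2 * (CI ^ 2 * H ^ 2) * t ^ 4 + 2 * m ^ 2 := by
      have := pow_le_pow_left₀ (sq_nonneg s) hinterp 2
      nlinarith [add_sq_le (a := CI * H * t ^ 2) (b := m)]
    have hK0 : 0 ≤ K := by positivity
    nlinarith [mul_le_mul_of_nonneg_left hs4 hK0, sq_nonneg m, pow_nonneg ht 4]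
  rw [div_mul_eq_mul_div, le_div_iff₀ hν]
  linarith

section CDANewton

variable {V W : Type*} [NormedAddCommGroup V] [InnerProductSpace ℝ V]
  [NormedAddCommGroup W] [InnerProductSpace ℝ W]
  (G : V →ₗ[ℝ] W) (b : V →ₗ[ℝ] V →ₗ[ℝ] V →ₗ[ℝ] ℝ) (f : V →ₗ[ℝ] ℝ)

lemma norm_le_of_weak_solution {F ν : ℝ} (hF : 0 ≤ F) (hν : 0 < ν)
    (hbskew : ∀ u v : V, b u v v = 0) (hf : ∀ v : V, |f v| ≤ F * ‖G v‖) {u : V}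
    (hu : ∀ v : V, ν * (inner ℝ (G u) (G v) : ℝ) + b u u v = f v) :
    ‖G u‖ ≤ F / ν := by
  have henergy : ν * ‖G u‖ ^ 2 ≤ F * ‖G u‖ := by
    have h := hu u
    rw [hbskew, real_inner_self_eq_norm_sq] at h
    linarith [le_abs_self (f u), hf u]
  rw [le_div_iff₀ hν]
  rcases (norm_nonneg (G u)).eq_or_lt with h | h
  · rwa [← h, zero_mul]
  · nlinarith

lemma cda_newton_error_energy (IH : V →ₗ[ℝ] V) {ν μ : ℝ} {u w w' : V}
    (hbskew : ∀ u v : V, b u v v = 0)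
    (hu : ∀ v : V, ν * (inner ℝ (G u) (G v) : ℝ) + b u u v = f v)
    (hstep : ∀ v : V, ν * (inner ℝ (G w') (G v) : ℝ) + b w w' v + b w' w v
      + μ * (inner ℝ (IH (w' - u)) (IH v) : ℝ) = f v + b w w v) :
    ν * ‖G (u - w')‖ ^ 2 + μ * ‖IH (u - w')‖ ^ 2
      = -b (u - w') u (u - w') + b (u - w') (u - w) (u - w') - b (u - w) (u - w) (u - w') := by
  have hsol := hu (u - w')
  have hnewton := hstep (u - w')
  have hskew := hbskew u (u - w')
  have hskew' := hbskew (u - w) (u - w')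
  rw [← real_inner_self_eq_norm_sq, ← real_inner_self_eq_norm_sq]
  simp only [map_sub, LinearMap.sub_apply, inner_sub_left, inner_sub_right]
    at hsol hnewton hskew hskew' ⊢
  linear_combination hsol - hnewton + hskew' - hskew

lemma cda_newton_error_energy_le (IH : V →ₗ[ℝ] V) {M ν μ : ℝ} {u w w' : V}
    (hbskew : ∀ u v : V, b u v v = 0)
    (hb1 : ∀ u w v : V, |b u w v| ≤ M * Real.sqrt ‖u‖ * Real.sqrt ‖G u‖ * ‖G w‖ * ‖G v‖)
    (hb3 : ∀ u w v : V, |b u w v| ≤ M * ‖G u‖ * ‖G w‖ * Real.sqrt ‖v‖ * Real.sqrt ‖G v‖)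
    (hu : ∀ v : V, ν * (inner ℝ (G u) (G v) : ℝ) + b u u v = f v)
    (hstep : ∀ v : V, ν * (inner ℝ (G w') (G v) : ℝ) + b w w' v + b w' w v
      + μ * (inner ℝ (IH (w' - u)) (IH v) : ℝ) = f v + b w w v) :
    ν * ‖G (u - w')‖ ^ 2 + μ * ‖IH (u - w')‖ ^ 2
      ≤ M * (‖G u‖ + ‖G (u - w)‖) * √‖u - w'‖ * √‖G (u - w')‖ * ‖G (u - w')‖
        + M * ‖G (u - w)‖ ^ 2 * √‖u - w'‖ * √‖G (u - w')‖ := by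
  rw [cda_newton_error_energy G b f IH hbskew hu hstep]
  have h1 := hb1 (u - w') u (u - w')
  have h2 := hb1 (u - w') (u - w) (u - w')
  have h3 := hb3 (u - w) (u - w) (u - w')
  linarith [neg_abs_le (b (u - w') u (u - w')), le_abs_self (b (u - w') (u - w) (u - w')),
    neg_abs_le (b (u - w) (u - w) (u - w'))]

lemma cda_newton_step_quadratic (IH : V →ₗ[ℝ] V) {M F ν μ CI H A E₀ : ℝ} {u w w' : V}
    (hM : 0 ≤ M) (hν : 0 < ν) (hCI : 0 < CI) (hH : 0 < H) (hA : 0 < A)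
    (hbskew : ∀ u v : V, b u v v = 0)
    (hb1 : ∀ u w v : V, |b u w v| ≤ M * Real.sqrt ‖u‖ * Real.sqrt ‖G u‖ * ‖G w‖ * ‖G v‖)
    (hb3 : ∀ u w v : V, |b u w v| ≤ M * ‖G u‖ * ‖G w‖ * Real.sqrt ‖v‖ * Real.sqrt ‖G v‖)
    (hIH : ∀ v : V, ‖v - IH v‖ ≤ CI * H * ‖G v‖)
    (hu : ∀ v : V, ν * (inner ℝ (G u) (G v) : ℝ) + b u u v = f v) (hGu : ‖G u‖ ≤ F / ν)
    (hμ : μ ≥ ν / (8 * CI ^ 2 * H ^ 2))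
    (hcond : ν / (16 * CI ^ 2 * H ^ 2) - M ^ 4 / (16 * A ^ 2 * ν)
      - (64 * M ^ 4 / ν ^ 3) * E₀ ^ 4 - 64 * ν * (M * F / ν ^ 2) ^ 4 ≥ 0)
    (hstep : ∀ v : V, ν * (inner ℝ (G w') (G v) : ℝ) + b w w' v + b w' w v
      + μ * (inner ℝ (IH (w' - u)) (IH v) : ℝ) = f v + b w w v)
    (hE : ‖G (u - w)‖ ≤ E₀) :
    ‖G (u - w')‖ ≤ √(8 * A / ν) * ‖G (u - w)‖ ^ 2 := by
  have henergy := cda_newton_error_energy_le G b f IH hbskew hb1 hb3 hu hstep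
  -- with `‖e'‖ = s²` and `‖∇e'‖ = t²` all the half powers become polynomial
  obtain ⟨s, hs, hs2⟩ : ∃ s, 0 ≤ s ∧ ‖u - w'‖ = s ^ 2 :=
    ⟨_, Real.sqrt_nonneg _, (Real.sq_sqrt (norm_nonneg _)).symm⟩
  obtain ⟨t, ht, ht2⟩ : ∃ t, 0 ≤ t ∧ ‖G (u - w')‖ = t ^ 2 :=
    ⟨_, Real.sqrt_nonneg _, (Real.sq_sqrt (norm_nonneg _)).symm⟩
  have hinterp : s ^ 2 ≤ CI * H * t ^ 2 + ‖IH (u - w')‖ := by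
    rw [← hs2, ← ht2]
    linarith [norm_le_norm_sub_add (u - w') (IH (u - w')), hIH (u - w')]
  rw [hs2, ht2, Real.sqrt_sq hs, Real.sqrt_sq ht] at henergy
  have hquartic := cda_energy_absorption hν hA hM hCI hH hμ hcond hs ht (norm_nonneg _) hGu
    (norm_nonneg _) hE hinterp (by linarith)
  rw [ht2, ← pow_le_pow_iff_left₀ (sq_nonneg t) (by positivity) two_ne_zero, mul_pow,
    Real.sq_sqrt (by positivity)]
  linarith

end CDANewton

theorem cda_newton_convergence_no_smallness_general
    {V W : Type*} [NormedAddCommGroup V] [InnerProductSpace ℝ V]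
    [NormedAddCommGroup W] [InnerProductSpace ℝ W]
    (G : V →ₗ[ℝ] W) (b : V →ₗ[ℝ] V →ₗ[ℝ] V →ₗ[ℝ] ℝ) (f : V →ₗ[ℝ] ℝ)
    (M F ν : ℝ) (hM : 0 < M) (hF : 0 ≤ F) (hν : 0 < ν)
    (hbskew : ∀ u v : V, b u v v = 0)
    (hb1 : ∀ u w v : V, |b u w v| ≤ M * Real.sqrt ‖u‖ * Real.sqrt ‖G u‖ * ‖G w‖ * ‖G v‖)
    (hb3 : ∀ u w v : V, |b u w v| ≤ M * ‖G u‖ * ‖G w‖ * Real.sqrt ‖v‖ * Real.sqrt ‖G v‖)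
    (hf : ∀ v : V, |f v| ≤ F * ‖G v‖)
    (IH : V →ₗ[ℝ] V) (CI H μ : ℝ) (hCI : 0 < CI) (hH : 0 < H)
    (hIH : ∀ v : V, ‖v - IH v‖ ≤ CI * H * ‖G v‖)
    (u : V) (hu : ∀ v : V, ν * (inner ℝ (G u) (G v) : ℝ) + b u u v = f v)
    (hμ' : μ ≥ ν / (8 * CI ^ 2 * H ^ 2))
    (uk : ℕ → V)
    (hstep : ∀ k, ∀ v : V, ν * (inner ℝ (G (uk (k + 1))) (G v) : ℝ) + b (uk k) (uk (k + 1)) v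
      + b (uk (k + 1)) (uk k) v + μ * (inner ℝ (IH (uk (k + 1) - u)) (IH v) : ℝ)
      = f v + b (uk k) (uk k) v)
    (A : ℝ) (hA : 0 < A)
    (hinit : Real.sqrt (8 * A / ν) * ‖G (u - uk 0)‖ < 1)
    (hcond : ν / (16 * CI ^ 2 * H ^ 2) - M ^ 4 / (16 * A ^ 2 * ν)
      - (64 * M ^ 4 / ν ^ 3) * ‖G (u - uk 0)‖ ^ 4 - 64 * ν * (M * F / ν ^ 2) ^ 4 ≥ 0)
    : (∀ k, ‖G (u - uk (k + 1))‖ ≤ Real.sqrt (8 * A / ν) * ‖G (u - uk k)‖ ^ 2) ∧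
      Filter.Tendsto (fun k => ‖G (u - uk k)‖) Filter.atTop (nhds 0) := by
  have hGu := norm_le_of_weak_solution G b f hF hν hbskew hf hu
  have hquad : ∀ k, ‖G (u - uk k)‖ ≤ ‖G (u - uk 0)‖ →
      ‖G (u - uk (k + 1))‖ ≤ √(8 * A / ν) * ‖G (u - uk k)‖ ^ 2 := fun k hk =>
    cda_newton_step_quadratic G b f IH hM.le hν hCI hH hA hbskew hb1 hb3 hIH hu hGu hμ' hcond
      (hstep k) hk
  have hq : 0 ≤ √(8 * A / ν) * ‖G (u - uk 0)‖ := by positivity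
  have hgeo := le_geometric_of_quadratic_step (x := fun k => ‖G (u - uk k)‖)
    (Real.sqrt_nonneg _) (fun _ => norm_nonneg _) hinit.le hquad
  refine ⟨fun k => hquad k ((hgeo k).trans ?_), squeeze_zero (fun _ => norm_nonneg _) hgeo ?_⟩
  · exact mul_le_of_le_one_left (norm_nonneg _) (pow_le_one₀ hq hinit.le)
  · simpa using (tendsto_pow_atTop_nhds_zero_of_lt_one hq hinit).mul_const ‖G (u - uk 0)‖

theorem cda_newton_convergence_no_smallness
    {V W : Type*} [NormedAddCommGroup V] [InnerProductSpace ℝ V]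
    [NormedAddCommGroup W] [InnerProductSpace ℝ W]
    (G : V →ₗ[ℝ] W) (b : V →ₗ[ℝ] V →ₗ[ℝ] V →ₗ[ℝ] ℝ) (f : V →ₗ[ℝ] ℝ)
    (M F ν : ℝ) (hM : 0 < M) (hF : 0 ≤ F) (hν : 0 < ν)
    (hbskew : ∀ u v : V, b u v v = 0)
    (hb1 : ∀ u w v : V, |b u w v| ≤ M * Real.sqrt ‖u‖ * Real.sqrt ‖G u‖ * ‖G w‖ * ‖G v‖)
    (hb2 : ∀ u w v : V, |b u w v| ≤ M * ‖G u‖ * ‖G w‖ * ‖G v‖)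
    (hb3 : ∀ u w v : V, |b u w v| ≤ M * ‖G u‖ * ‖G w‖ * Real.sqrt ‖v‖ * Real.sqrt ‖G v‖)
    (hf : ∀ v : V, |f v| ≤ F * ‖G v‖)
    (IH : V →ₗ[ℝ] V) (CI H μ : ℝ) (hCI : 0 < CI) (hH : 0 < H) (hμ : 0 < μ)
    (hIH : ∀ v : V, ‖v - IH v‖ ≤ CI * H * ‖G v‖)
    (u : V) (hu : ∀ v : V, ν * (inner ℝ (G u) (G v) : ℝ) + b u u v = f v)
    (hμ' : μ ≥ ν / (8 * CI ^ 2 * H ^ 2))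
    (uk : ℕ → V)
    (hstep : ∀ k, ∀ v : V, ν * (inner ℝ (G (uk (k + 1))) (G v) : ℝ) + b (uk k) (uk (k + 1)) v
      + b (uk (k + 1)) (uk k) v + μ * (inner ℝ (IH (uk (k + 1) - u)) (IH v) : ℝ)
      = f v + b (uk k) (uk k) v)
    (A : ℝ) (hA : 0 < A)
    (hinit : Real.sqrt (8 * A / ν) * ‖G (u - uk 0)‖ < 1)
    (hcond : ν / (16 * CI ^ 2 * H ^ 2) - M ^ 4 / (16 * A ^ 2 * ν)
      - (64 * M ^ 4 / ν ^ 3) * ‖G (u - uk 0)‖ ^ 4 - 64 * ν * (M * F / ν ^ 2) ^ 4 ≥ 0)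
    : (∀ k, ‖G (u - uk (k + 1))‖ ≤ Real.sqrt (8 * A / ν) * ‖G (u - uk k)‖ ^ 2) ∧
      Filter.Tendsto (fun k => ‖G (u - uk k)‖) Filter.atTop (nhds 0) :=
  cda_newton_convergence_no_smallness_general G b f M F ν hM hF hν hbskew hb1 hb3 hf IH CI H μ hCI
    hH hIH u hu hμ' uk hstep A hA hinit hcond
end
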